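/- arXiv:1405.2877 — 14 statements merged into one kernel-verified Lean document; each statement's English description precedes it below -/
import Mathlib

section
/- Let y ∈ Fix T, r > 0 with the closed ball B(y; r) ⊆ Fix T, and let x ∈ X \ Fix T. Then τ_x := ⟨x − y, (x − Tx)/‖x − Tx‖⟩ − (r + ‖x − Tx‖) ≥ 0. -/
open scoped RealInnerProductSpace

theorem tau_nonneg
    {X : Type*} [NormedAddCommGroup X] [InnerProductSpace ℝ X]
    (T : X → X) (hne : ∃ y, T y = y)
    (hcut : ∀ x z : X, T z = z → ⟪z - T x, x - T x⟫ ≤ 0)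
    (y : X) (hy : T y = y) (r : ℝ) (hr : 0 < r)
    (hball : Metric.closedBall y r ⊆ {z | T z = z})
    (x : X) (hx : T x ≠ x) :
    0 ≤ ⟪x - y, ‖x - T x‖⁻¹ • (x - T x)⟫ - (r + ‖x - T x‖) := by
  set d : ℝ := ‖x - T x‖ with hd
  have hd0 : 0 < d := by
    rw [hd, norm_pos_iff, sub_ne_zero]
    exact fun h => hx h.symm
  set z : X := y + (r * d⁻¹) • (x - T x) with hz
  have hzfix : T z = z := by
    apply hball
    simp only [Metric.mem_closedBall, dist_eq_norm, hz, add_sub_cancel_left,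
      norm_smul, Real.norm_eq_abs]
    rw [abs_of_nonneg (by positivity)]
    rw [mul_assoc, inv_mul_cancel₀ hd0.ne', mul_one]
  have hkey := hcut x z hzfix
  have hexp : ⟪z - T x, x - T x⟫ = ⟪y - T x, x - T x⟫ + r * d := by
    rw [hz, add_sub_right_comm, inner_add_left, real_inner_smul_left,
      real_inner_self_eq_norm_sq, ← hd]
    field_simp
  have h1 : ⟪y - T x, x - T x⟫ ≤ -(r * d) := by linarith [hexp ▸ hkey]
  have h2 : ⟪x - y, x - T x⟫ = ⟪x - T x, x - T x⟫ - ⟪y - T x, x - T x⟫ := by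
    rw [← inner_sub_left]; congr 1; abel
  have h3 : d * (r + d) ≤ ⟪x - y, x - T x⟫ := by
    rw [h2, real_inner_self_eq_norm_sq, ← hd]
    nlinarith
  rw [real_inner_smul_right]
  have h4 := mul_le_mul_of_nonneg_left h3 (inv_nonneg.mpr hd0.le)
  rw [← mul_assoc, inv_mul_cancel₀ hd0.ne', one_mul] at h4
  linarith
end

section
/- Let y ∈ Fix T, r > 0 with B(y; r) ⊆ Fix T, and x ∈ X \ Fix T. Define U_r x := Tx + (r/‖Tx − x‖)(Tx − x). Then ‖U_r x − y‖² ≤ ‖Tx − y‖² − r². -/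
open scoped RealInnerProductSpace

theorem Ur_ineq_Tx
    {X : Type*} [NormedAddCommGroup X] [InnerProductSpace ℝ X]
    (T : X → X) (hne : ∃ y, T y = y)
    (hcut : ∀ x z : X, T z = z → ⟪z - T x, x - T x⟫ ≤ 0)
    (y : X) (hy : T y = y) (r : ℝ) (hr : 0 < r)
    (hball : Metric.closedBall y r ⊆ {z | T z = z})
    (x : X) (hx : T x ≠ x) :
    ‖(T x + (r / ‖T x - x‖) • (T x - x)) - y‖ ^ 2 ≤ ‖T x - y‖ ^ 2 - r ^ 2 := by
  set d := T x - x with hd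
  have hdne : d ≠ 0 := sub_ne_zero.mpr hx
  have hdpos : (0:ℝ) < ‖d‖ := norm_pos_iff.mpr hdne
  set c := r / ‖d‖ with hc
  have hcpos : 0 < c := div_pos hr hdpos
  have hcd : c * ‖d‖ = r := div_mul_cancel₀ r (ne_of_gt hdpos)
  have hnormcd : ‖c • d‖ = r := by
    rw [norm_smul, Real.norm_eq_abs, abs_of_pos hcpos, hcd]
  have hz : T (y - c • d) = y - c • d := by
    apply hball
    simp only [Metric.mem_closedBall, dist_eq_norm]
    rw [show y - c • d - y = -(c • d) by abel, norm_neg, hnormcd]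
  have hkey := hcut x (y - c • d) hz
  have hexp : ⟪y - c • d - T x, x - T x⟫ = ⟪T x - y, d⟫ + c * ‖d‖ ^ 2 := by
    have hxT : x - T x = -d := by rw [hd]; abel
    rw [hxT, inner_neg_right, inner_sub_left, inner_sub_left,
      real_inner_smul_left, real_inner_self_eq_norm_sq]
    rw [show ⟪T x - y, d⟫ = ⟪T x, d⟫ - ⟪y, d⟫ from inner_sub_left _ _ _]
    ring
  rw [hexp] at hkey
  have hip : ⟪T x - y, d⟫ ≤ -(r * ‖d‖) := by nlinarith
  have huy : T x + c • d - y = (T x - y) + c • d := by abel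
  rw [huy, norm_add_sq_real, real_inner_smul_right, hnormcd]
  nlinarith
end

section
/- Let y ∈ Fix T, r > 0 with B(y; r) ⊆ Fix T, and x ∈ X \ Fix T. Define U_r x := Tx + (r/‖Tx − x‖)(Tx − x). Then ‖U_r x − y‖² ≤ ‖x − y‖² − (r + ‖x − Tx‖)² ≤ ‖x − y‖² − r² − ‖x − Tx‖². -/
open scoped RealInnerProductSpace

theorem Ur_ineq_x
    {X : Type*} [NormedAddCommGroup X] [InnerProductSpace ℝ X]
    (T : X → X) (hne : ∃ y, T y = y)
    (hcut : ∀ x z : X, T z = z → ⟪z - T x, x - T x⟫ ≤ 0)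
    (y : X) (hy : T y = y) (r : ℝ) (hr : 0 < r)
    (hball : Metric.closedBall y r ⊆ {z | T z = z})
    (x : X) (hx : T x ≠ x) :
    ‖(T x + (r / ‖T x - x‖) • (T x - x)) - y‖ ^ 2
      ≤ ‖x - y‖ ^ 2 - (r + ‖x - T x‖) ^ 2 ∧
    ‖x - y‖ ^ 2 - (r + ‖x - T x‖) ^ 2 ≤ ‖x - y‖ ^ 2 - r ^ 2 - ‖x - T x‖ ^ 2 := by
  set d : ℝ := ‖T x - x‖ with hd
  have hd2 : ‖x - T x‖ = d := by rw [hd, norm_sub_rev]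
  have hdpos : 0 < d := by
    rw [hd, norm_pos_iff, sub_ne_zero]; exact hx
  -- the shifted point z is in the ball, hence a fixed point
  set z : X := y + (r / d) • (x - T x) with hz
  have hzfix : T z = z := by
    apply hball
    simp only [Metric.mem_closedBall, dist_eq_norm, hz]
    have : y + (r / d) • (x - T x) - y = (r / d) • (x - T x) := by abel
    rw [this, norm_smul, hd2]
    have : ‖(r / d : ℝ)‖ = r / d := by
      rw [Real.norm_eq_abs, abs_of_pos (div_pos hr hdpos)]
    rw [this, div_mul_cancel₀ _ (ne_of_gt hdpos)]
  set c : ℝ := ⟪T x - y, T x - x⟫ with hc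
  have hkey : c ≤ -(r * d) := by
    have h := hcut x z hzfix
    have hzt : z - T x = -(T x - y) + (r / d) • (x - T x) := by rw [hz]; abel
    rw [hzt, inner_add_left, inner_smul_left, inner_neg_left] at h
    have h1 : ⟪T x - y, x - T x⟫ = -c := by
      rw [hc, ← inner_neg_right]; congr 1; abel
    have h2 : ⟪x - T x, x - T x⟫ = d ^ 2 := by
      rw [real_inner_self_eq_norm_sq, hd2]
    rw [h1] at h
    simp only [starRingEnd_apply, star_trivial] at h
    rw [h2] at h
    have : r / d * d ^ 2 = r * d := by field_simp
    nlinarith [h]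
  -- expansion of ‖Ux - y‖²
  have e1 : ‖(T x + (r / d) • (T x - x)) - y‖ ^ 2
      = ‖T x - y‖ ^ 2 + 2 * (r / d * c) + r ^ 2 := by
    have : (T x + (r / d) • (T x - x)) - y = (T x - y) + (r / d) • (T x - x) := by abel
    rw [this, norm_add_sq_real, inner_smul_right, norm_smul, hc]
    have hrd : ‖(r / d : ℝ)‖ = r / d := by
      rw [Real.norm_eq_abs, abs_of_pos (div_pos hr hdpos)]
    rw [hrd, mul_pow]
    have : (r / d) ^ 2 * ‖T x - x‖ ^ 2 = r ^ 2 := by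
      rw [← hd]; field_simp
    rw [this]
  have e2 : ‖x - y‖ ^ 2 = d ^ 2 + 2 * (-c) + ‖T x - y‖ ^ 2 := by
    have : x - y = (x - T x) + (T x - y) := by abel
    rw [this, norm_add_sq_real, hd2]
    have : ⟪x - T x, T x - y⟫ = -c := by
      rw [real_inner_comm, hc, ← inner_neg_right]; congr 1; abel
    rw [this]
  constructor
  · rw [e1, e2]
    have h3 : r / d * c ≤ r / d * (-(r * d)) :=
      mul_le_mul_of_nonneg_left hkey (le_of_lt (div_pos hr hdpos))
    have h4 : r / d * (-(r * d)) = -(r ^ 2) := by field_simp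
    rw [h4] at h3
    rw [hd2]
    nlinarith [h3, hkey]
  · rw [hd2]; nlinarith [mul_pos hr hdpos]
end

section
/- Let y ∈ Fix T, r > 0 with B(y; r) ⊆ Fix T, x ∈ X \ Fix T, and η ∈ [0, 2]. Define U_{r,η} x := x + η·((r + ‖x − Tx‖)/‖Tx − x‖)(Tx − x). Then ‖U_{r,η} x − y‖² ≤ ‖x − y‖² − η(2 − η)(r + ‖x − Tx‖)². -/
open scoped RealInnerProductSpace

theorem Ur_eta_ineq
    {X : Type*} [NormedAddCommGroup X] [InnerProductSpace ℝ X]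
    (T : X → X) (hne : ∃ y, T y = y)
    (hcut : ∀ x z : X, T z = z → ⟪z - T x, x - T x⟫ ≤ 0)
    (y : X) (hy : T y = y) (r : ℝ) (hr : 0 < r)
    (hball : Metric.closedBall y r ⊆ {z | T z = z})
    (x : X) (hx : T x ≠ x) (η : ℝ) (hη : η ∈ Set.Icc (0:ℝ) 2) :
    ‖(x + η • (((r + ‖x - T x‖) / ‖T x - x‖) • (T x - x))) - y‖ ^ 2
      ≤ ‖x - y‖ ^ 2 - η * (2 - η) * (r + ‖x - T x‖) ^ 2 := by
  obtain ⟨hη0, hη2⟩ := hη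
  set d := ‖T x - x‖ with hdd
  have hd0 : 0 < d := by
    rw [hdd, norm_pos_iff, sub_ne_zero]; exact hx
  have hxd : ‖x - T x‖ = d := by rw [hdd, norm_sub_rev]
  set z : X := y + (r / d) • (x - T x) with hzdef
  have hz : T z = z := by
    apply hball
    simp only [Metric.mem_closedBall, dist_eq_norm, hzdef, add_sub_cancel_left]
    rw [norm_smul, Real.norm_eq_abs, abs_of_nonneg (div_nonneg hr.le hd0.le), hxd,
      div_mul_cancel₀ r hd0.ne']
  have hc := hcut x z hz
  have hzexp : z - T x = (y - T x) + (r / d) • (x - T x) := by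
    rw [hzdef]; abel
  rw [hzexp, inner_add_left, real_inner_smul_left, real_inner_self_eq_norm_sq, hxd] at hc
  -- hc : ⟪y - T x, x - T x⟫ + (r/d) * d^2 ≤ 0
  have hrd : r / d * d ^ 2 = r * d := by field_simp
  have hkey : ⟪x - y, T x - x⟫ ≤ -((r + d) * d) := by
    have h1 : x - y = (x - T x) - (y - T x) := by abel
    have h2 : T x - x = -(x - T x) := by abel
    rw [h1, h2, inner_neg_right, inner_sub_left, real_inner_self_eq_norm_sq, hxd]
    nlinarith [hc]
  set c : ℝ := η * ((r + d) / d) with hcdef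
  have hc0 : 0 ≤ c := mul_nonneg hη0 (div_nonneg (by positivity) hd0.le)
  have hcd : c * d = η * (r + d) := by rw [hcdef]; field_simp
  have hU : (x + η • (((r + ‖x - T x‖) / ‖T x - x‖) • (T x - x))) - y
      = (x - y) + c • (T x - x) := by
    rw [hxd, ← hdd, smul_smul, hcdef]; abel
  rw [hU, hxd, norm_add_sq_real, real_inner_smul_right, norm_smul, Real.norm_eq_abs,
    abs_of_nonneg hc0, mul_pow, ← hdd]
  have hmul : c * ⟪x - y, T x - x⟫ ≤ c * (-((r + d) * d)) :=
    mul_le_mul_of_nonneg_left hkey hc0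
  have h3 : c ^ 2 * d ^ 2 = (η * (r + d)) ^ 2 := by rw [← hcd]; ring
  have h4 : c * (-((r + d) * d)) = -(η * (r + d) * (r + d)) := by
    rw [show c * (-((r + d) * d)) = -((c * d) * (r + d)) by ring, hcd]
  nlinarith [hmul, h3, h4]
end

section
/- Suppose C is an obtuse cone, i.e., a nonempty closed convex cone whose polar cone C^⊖ := {x : sup⟨C, x⟩ = 0} satisfies C^⊖ ⊆ −C. Let λ : X → [1, 2] be arbitrary, and define Q x := (1 − λ(x))x + λ(x) P_C x. Then Q is a quasi projector of C: ran Q = Fix Q = C and ‖Qx − c‖ ≤ ‖x − c‖ for all x ∈ X and c ∈ C. -/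
open scoped RealInnerProductSpace

theorem obtuse_cone_quasi_projector
    {X : Type*} [NormedAddCommGroup X] [InnerProductSpace ℝ X]
    (C : Set X) (hCne : C.Nonempty) (hCcl : IsClosed C) (hCcv : Convex ℝ C)
    (hcone : ∀ c ∈ C, ∀ t : ℝ, 0 ≤ t → t • c ∈ C)
    (hobtuse : {x : X | ∀ c ∈ C, ⟪c, x⟫ ≤ 0} ⊆ -C)
    (P : X → X) (hP : ∀ x : X, P x ∈ C ∧ ∀ c ∈ C, ‖x - P x‖ ≤ ‖x - c‖)
    (lam : X → ℝ) (hlam : ∀ x, lam x ∈ Set.Icc (1:ℝ) 2)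
    (Q : X → X) (hQ : ∀ x : X, Q x = (1 - lam x) • x + lam x • P x) :
    Set.range Q = C ∧ {x : X | Q x = x} = C ∧
      ∀ x : X, ∀ c ∈ C, ‖Q x - c‖ ≤ ‖x - c‖ := by
  -- variational inequality for the projection
  have hproj : ∀ x : X, ∀ c ∈ C, ⟪x - P x, c - P x⟫ ≤ 0 := by
    intro x c hc
    by_contra h
    push_neg at h
    set a := ⟪x - P x, c - P x⟫ with ha
    set b := ‖c - P x‖ ^ 2 with hb
    have hb0 : 0 ≤ b := sq_nonneg _
    have key : ∀ t : ℝ, 0 < t → t ≤ 1 → 2 * a ≤ t * b := by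
      intro t ht0 ht1
      have hmem : (1 - t) • P x + t • c ∈ C :=
        hCcv (hP x).1 hc (by linarith) ht0.le (by ring)
      have hle := (hP x).2 _ hmem
      have hsq : ‖x - P x‖ ^ 2 ≤ ‖x - ((1 - t) • P x + t • c)‖ ^ 2 :=
        pow_le_pow_left₀ (norm_nonneg _) hle 2
      have hrw : x - ((1 - t) • P x + t • c) = (x - P x) - t • (c - P x) := by
        module
      rw [hrw] at hsq
      have hexp : ‖(x - P x) - t • (c - P x)‖ ^ 2
          = ‖x - P x‖ ^ 2 - 2 * t * a + t ^ 2 * b := by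
        rw [norm_sub_sq_real, real_inner_smul_right, norm_smul]
        rw [ha, hb]
        rw [Real.norm_eq_abs, mul_pow, sq_abs]
        ring
      rw [hexp] at hsq
      nlinarith
    by_cases hb' : b = 0
    · have := key 1 one_pos le_rfl
      rw [hb'] at this; linarith
    · have hbpos : 0 < b := lt_of_le_of_ne hb0 (Ne.symm hb')
      have hkey := key (min 1 (a / b)) (lt_min one_pos (div_pos h hbpos)) (min_le_left _ _)
      have h2 : min 1 (a / b) * b ≤ a := by
        calc min 1 (a / b) * b ≤ (a / b) * b :=
              mul_le_mul_of_nonneg_right (min_le_right _ _) hbpos.le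
          _ = a := by field_simp
      linarith
  have hzero : (0 : X) ∈ C := by
    obtain ⟨c, hc⟩ := hCne
    simpa using hcone c hc 0 le_rfl
  have hadd : ∀ a ∈ C, ∀ b ∈ C, a + b ∈ C := by
    intro a ha b hb
    have hmid : ((1:ℝ)/2) • a + ((1:ℝ)/2) • b ∈ C :=
      hCcv ha hb (by norm_num) (by norm_num) (by norm_num)
    have h2 := hcone _ hmid 2 (by norm_num)
    have he : (2:ℝ) • (((1:ℝ)/2) • a + ((1:ℝ)/2) • b) = a + b := by module
    rwa [he] at h2
  have hperp : ∀ x : X, ⟪x - P x, P x⟫ = 0 := by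
    intro x
    have h1 := hproj x ((2:ℝ) • P x) (hcone _ (hP x).1 2 (by norm_num))
    have h2 := hproj x 0 hzero
    have e1 : (2:ℝ) • P x - P x = P x := by module
    rw [e1] at h1
    rw [zero_sub, inner_neg_right] at h2
    linarith
  have hpolar : ∀ x : X, P x - x ∈ C := by
    intro x
    have hx : x - P x ∈ {y : X | ∀ c ∈ C, ⟪c, y⟫ ≤ 0} := by
      intro c hc
      have h1 := hproj x c hc
      have h2 := hperp x
      have e : ⟪x - P x, c⟫ = ⟪x - P x, c - P x⟫ + ⟪x - P x, P x⟫ := by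
        rw [← inner_add_right]
        congr 1
        module
      rw [real_inner_comm]
      rw [e]
      linarith
    have hmem := hobtuse hx
    rw [Set.mem_neg] at hmem
    have : -(x - P x) = P x - x := by module
    rwa [this] at hmem
  have hfixC : ∀ x ∈ C, Q x = x := by
    intro x hx
    have h : ‖x - P x‖ ≤ 0 := by simpa using (hP x).2 x hx
    have hPx : P x = x := by
      have := norm_le_zero_iff.mp h
      have := sub_eq_zero.mp this
      exact this.symm
    rw [hQ x, hPx]
    module
  have hranC : ∀ x, Q x ∈ C := by
    intro x
    have h1 : P x - x ∈ C := hpolar x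
    have h2 : (lam x - 1) • (P x - x) ∈ C :=
      hcone _ h1 _ (by linarith [(hlam x).1])
    have h3 := hadd _ (hP x).1 _ h2
    have he : Q x = P x + (lam x - 1) • (P x - x) := by rw [hQ x]; module
    rw [he]; exact h3
  refine ⟨?_, ?_, ?_⟩
  · ext x
    constructor
    · rintro ⟨y, rfl⟩; exact hranC y
    · intro hx; exact ⟨x, hfixC x hx⟩
  · ext x
    constructor
    · intro hx
      have : Q x = x := hx
      rw [← this]; exact hranC x
    · intro hx; exact hfixC x hx
  · intro x c hc
    set L := lam x with hL
    have hL1 : 1 ≤ L := (hlam x).1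
    have hL2 : L ≤ 2 := (hlam x).2
    set v := P x - x with hv
    have hiv : ⟪x - c, v⟫ ≤ -‖v‖ ^ 2 := by
      have h1 := hproj x c hc
      have e : ⟪x - c, v⟫ = -‖v‖ ^ 2 + ⟪x - P x, c - P x⟫ := by
        have e1 : x - c = (x - P x) + (P x - c) := by module
        rw [e1, inner_add_left]
        have e2 : ⟪x - P x, v⟫ = -‖v‖ ^ 2 := by
          rw [hv]
          have : x - P x = -(P x - x) := by module
          rw [this, inner_neg_left, real_inner_self_eq_norm_sq]
        have e3 : ⟪P x - c, v⟫ = ⟪x - P x, c - P x⟫ := by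
          rw [hv]
          have : (P x - c : X) = -(c - P x) := by module
          rw [this, inner_neg_left]
          have : (P x - x : X) = -(x - P x) := by module
          rw [this, inner_neg_right, real_inner_comm]
          ring
        rw [e2, e3]
      rw [e]; linarith
    have hQx : Q x - c = (x - c) + L • v := by rw [hQ x]; module
    have hsq : ‖Q x - c‖ ^ 2 ≤ ‖x - c‖ ^ 2 := by
      rw [hQx, norm_add_sq_real, real_inner_smul_right, norm_smul, Real.norm_eq_abs, mul_pow, sq_abs]
      nlinarith [mul_le_mul_of_nonneg_left hiv (by linarith : (0:ℝ) ≤ 2 * L), mul_nonneg (mul_nonneg (by linarith : (0:ℝ) ≤ L) (by linarith : (0:ℝ) ≤ 2 - L)) (sq_nonneg ‖v‖)]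
    nlinarith [norm_nonneg (Q x - c), norm_nonneg (x - c)]
end

section
/- If R : X → X is quasi nonexpansive (‖Rx − y‖ ≤ ‖x − y‖ for all x ∈ X and y ∈ Fix R) and C ⊆ Fix R is nonempty closed convex, then P_C ∘ R is a quasi projector of C, i.e., ran(P_C ∘ R) = Fix(P_C ∘ R) = C and ‖P_C(Rx) − c‖ ≤ ‖x − c‖ for all x ∈ X, c ∈ C. -/
open RealInnerProductSpace

theorem quasi_nonexpansive_comp_proj
    {X : Type*} [NormedAddCommGroup X] [InnerProductSpace ℝ X]
    (R : X → X) (hR : ∀ x y : X, R y = y → ‖R x - y‖ ≤ ‖x - y‖)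
    (C : Set X) (hCne : C.Nonempty) (hCcl : IsClosed C) (hCcv : Convex ℝ C)
    (hCfix : C ⊆ {y : X | R y = y})
    (P : X → X) (hP : ∀ x : X, P x ∈ C ∧ ∀ c ∈ C, ‖x - P x‖ ≤ ‖x - c‖) :
    Set.range (P ∘ R) = C ∧ {x : X | P (R x) = x} = C ∧
      ∀ x : X, ∀ c ∈ C, ‖P (R x) - c‖ ≤ ‖x - c‖ := by
  -- P fixes C
  have hPfix : ∀ c ∈ C, P c = c := by
    intro c hc
    have h := (hP c).2 c hc
    simp only [sub_self, norm_zero] at h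
    have : ‖c - P c‖ = 0 := le_antisymm h (norm_nonneg _)
    have := norm_sub_eq_zero_iff.mp this
    exact this.symm
  -- variational inequality
  have hvar : ∀ z : X, ∀ c ∈ C, ⟪z - P z, c - P z⟫ ≤ 0 := by
    intro z c hc
    have hmem := (hP z).1
    have heq : ‖z - P z‖ = ⨅ w : C, ‖z - w‖ := by
      letI : Nonempty C := ⟨⟨P z, hmem⟩⟩
      refine le_antisymm (le_ciInf fun w => (hP z).2 w w.2) ?_
      exact ciInf_le ⟨0, fun _ ⟨_, h⟩ => h ▸ norm_nonneg _⟩ (⟨P z, hmem⟩ : C)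
    exact (norm_eq_iInf_iff_real_inner_le_zero hCcv hmem).mp heq c hc
  -- quasi-nonexpansive projection
  have hPq : ∀ z : X, ∀ c ∈ C, ‖P z - c‖ ≤ ‖z - c‖ := by
    intro z c hc
    have h1 : ⟪z - P z, c - P z⟫ ≤ 0 := hvar z c hc
    have key : ‖P z - c‖ ^ 2 ≤ ‖z - c‖ ^ 2 := by
      have hdecomp : z - c = (z - P z) + (P z - c) := by abel
      have := norm_add_sq_real (z - P z) (P z - c)
      rw [← hdecomp] at this
      have h2 : ⟪z - P z, P z - c⟫ = - ⟪z - P z, c - P z⟫ := by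
        rw [← inner_neg_right, neg_sub]
      nlinarith [norm_nonneg (z - P z), sq_nonneg ‖z - P z‖]
    nlinarith [norm_nonneg (P z - c), norm_nonneg (z - c)]
  refine ⟨?_, ?_, fun x c hc => le_trans (hPq (R x) c hc) (hR x c (hCfix hc))⟩
  · ext c
    constructor
    · rintro ⟨x, rfl⟩; exact (hP (R x)).1
    · intro hc
      have h1 : R c = c := hCfix hc
      exact ⟨c, by simp [Function.comp, h1, hPfix c hc]⟩
  · ext x
    constructor
    · intro hx; rw [← hx]; exact (hP (R x)).1
    · intro hc
      have h1 : R x = x := hCfix hc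
      simp only [Set.mem_setOf_eq, h1]
      exact hPfix x hc
end

section
/- If a sequence (x_n) in X is Fejér monotone with respect to a set S with nonempty interior, then (x_n) converges strongly and Σ_n ‖x_n − x_{n+1}‖ < ∞. -/
/-! If `closedBall c r ⊆ S`, testing Fejér monotonicity against the point
`c + r • (xₙ - xₙ₊₁) / ‖xₙ - xₙ₊₁‖` of the ball gives
`2 r ‖xₙ - xₙ₊₁‖ ≤ ‖xₙ - c‖² - ‖xₙ₊₁ - c‖²`, which telescopes; summable steps make `(xₙ)` Cauchy. -/

open Metric

section InnerProductSpace

variable {X : Type*} [NormedAddCommGroup X] [InnerProductSpace ℝ X]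

theorem norm_sub_sq_sub_norm_sub_sq (x y c s : X) :
    ‖x - s‖ ^ 2 - ‖y - s‖ ^ 2 =
      ‖x - c‖ ^ 2 - ‖y - c‖ ^ 2 - 2 * inner ℝ (x - y) (s - c) := by
  have hx : x - s = (x - c) - (s - c) := by abel
  have hy : y - s = (y - c) - (s - c) := by abel
  rw [hx, hy, norm_sub_sq_real (x - c), norm_sub_sq_real (y - c)]
  simp only [inner_sub_left]
  ring

theorem two_mul_norm_sub_le_of_forall_mem_closedBall {x y c : X} {r : ℝ} (hr : 0 ≤ r)
    (h : ∀ s ∈ closedBall c r, ‖y - s‖ ≤ ‖x - s‖) :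
    2 * r * ‖x - y‖ ≤ ‖x - c‖ ^ 2 - ‖y - c‖ ^ 2 := by
  rcases eq_or_ne x y with rfl | hxy
  · simp
  set d := x - y
  have hd : ‖d‖ ≠ 0 := norm_ne_zero_iff.2 (sub_ne_zero.2 hxy)
  set s := c + (r / ‖d‖) • d
  have hs : s ∈ closedBall c r := by
    rw [mem_closedBall, dist_eq_norm, add_sub_cancel_left, norm_smul, Real.norm_eq_abs,
      abs_of_nonneg (by positivity), div_mul_cancel₀ r hd]
  have hinner : inner ℝ d (s - c) = r * ‖d‖ := by
    rw [add_sub_cancel_left, real_inner_smul_right, real_inner_self_eq_norm_sq]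
    field_simp
  have hsq : ‖y - s‖ ^ 2 ≤ ‖x - s‖ ^ 2 := pow_le_pow_left₀ (norm_nonneg _) (h s hs) 2
  linarith [norm_sub_sq_sub_norm_sub_sq x y c s]

end InnerProductSpace

theorem summable_of_le_sub_succ {f u : ℕ → ℝ} (hf : ∀ n, 0 ≤ f n) (hu : ∀ n, 0 ≤ u n)
    (h : ∀ n, f n ≤ u n - u (n + 1)) : Summable f := by
  refine summable_of_sum_range_le hf (c := u 0) fun n => ?_
  calc ∑ i ∈ Finset.range n, f i ≤ ∑ i ∈ Finset.range n, (u i - u (i + 1)) :=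
        Finset.sum_le_sum fun i _ => h i
    _ = u 0 - u n := Finset.sum_range_sub' u n
    _ ≤ u 0 := sub_le_self _ (hu n)

theorem raik_fejer
    {X : Type*} [NormedAddCommGroup X] [InnerProductSpace ℝ X] [CompleteSpace X]
    (S : Set X) (hS : (interior S).Nonempty)
    (x : ℕ → X) (hfejer : ∀ s ∈ S, ∀ n : ℕ, ‖x (n + 1) - s‖ ≤ ‖x n - s‖) :
    (∃ L : X, Filter.Tendsto x Filter.atTop (nhds L)) ∧
      Summable (fun n : ℕ => ‖x n - x (n + 1)‖) := by
  obtain ⟨c, hc⟩ := hS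
  obtain ⟨r, hr, hball⟩ := nhds_basis_closedBall.mem_iff.1 (mem_interior_iff_mem_nhds.1 hc)
  have hstep (n : ℕ) : 2 * r * ‖x n - x (n + 1)‖ ≤ ‖x n - c‖ ^ 2 - ‖x (n + 1) - c‖ ^ 2 :=
    two_mul_norm_sub_le_of_forall_mem_closedBall hr.le fun s hs => hfejer s (hball hs) n
  have hsum : Summable (fun n : ℕ => ‖x n - x (n + 1)‖) := by
    refine summable_of_le_sub_succ (u := fun n => ‖x n - c‖ ^ 2 / (2 * r))
      (fun n => norm_nonneg _) (fun n => by positivity) fun n => ?_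
    rw [← sub_div, le_div_iff₀ (by positivity), mul_comm]
    exact hstep n
  have hcauchy : CauchySeq x := cauchySeq_of_summable_dist (by simpa only [dist_eq_norm] using hsum)
  exact ⟨cauchySeq_tendsto_of_complete hcauchy, hsum⟩
end

section
/- Let X be a finite-dimensional real Hilbert space and f : X → ℝ convex and differentiable with inf f < 0. Then for every ρ > 0, inf{‖∇f(x)‖ : ‖x‖ ≤ ρ and f(x) > 0} > 0. -/
/-!
By convexity, `f` lies above its tangent plane at `x`; evaluated at a point `y` with `f y < 0`,
this gives `f x - f y ≤ ‖∇f(x)‖ ‖x - y‖`. On `{‖x‖ ≤ ρ, f x > 0}` the left side exceeds `-f y`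
and `‖x - y‖ ≤ ρ + ‖y‖`, so `‖∇f(x)‖ ≥ -f y / (ρ + ‖y‖)`.
-/

namespace ConvexOn

variable {E : Type*} [NormedAddCommGroup E] [NormedSpace ℝ E] {s : Set E} {f : E → ℝ}
  {f' : E →L[ℝ] ℝ} {x y : E}

theorem add_fderiv_sub_le (hf : ConvexOn ℝ s f) (hx : x ∈ s) (hy : y ∈ s)
    (hf' : HasFDerivAt f f' x) : f x + f' (y - x) ≤ f y := by
  set c : ℝ →ᵃ[ℝ] E := AffineMap.lineMap x y
  have hc0 : c 0 = x := AffineMap.lineMap_apply_zero x y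
  have hc1 : c 1 = y := AffineMap.lineMap_apply_one x y
  have hconv : ConvexOn ℝ (c ⁻¹' s) (f ∘ c) := hf.comp_affineMap c
  have hderiv : HasDerivAt (f ∘ c) (f' (y - x)) 0 :=
    (hc0 ▸ hf').comp_hasDerivAt 0 AffineMap.hasDerivAt_lineMap
  have hslope := hconv.le_slope_of_hasDerivAt (x := 0) (y := 1) (by simpa [hc0])
    (by simpa [hc1]) one_pos hderiv
  simp only [slope, Function.comp, hc0, hc1, sub_zero, inv_one, one_smul, vsub_eq_sub] at hslope
  linarith

theorem sub_le_norm_fderiv_mul_norm_sub (hf : ConvexOn ℝ s f) (hx : x ∈ s) (hy : y ∈ s)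
    (hf' : HasFDerivAt f f' x) : f x - f y ≤ ‖f'‖ * ‖x - y‖ := by
  have htangent := hf.add_fderiv_sub_le hx hy hf'
  calc f x - f y ≤ -f' (y - x) := by linarith
    _ ≤ ‖f' (y - x)‖ := neg_le_abs _
    _ ≤ ‖f'‖ * ‖y - x‖ := f'.le_opNorm _
    _ = ‖f'‖ * ‖x - y‖ := by rw [norm_sub_rev]

end ConvexOn

theorem gradient_bounded_below
    {X : Type*} [NormedAddCommGroup X] [InnerProductSpace ℝ X]
    [FiniteDimensional ℝ X]
    (f : X → ℝ) (hconv : ConvexOn ℝ Set.univ f)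
    (f' : X → X) (hf' : ∀ x : X, HasGradientAt f (f' x) x)
    (hinf : ∃ x, f x < 0) :
    ∀ ρ : ℝ, 0 < ρ →
      ∃ α : ℝ, 0 < α ∧ ∀ x : X, ‖x‖ ≤ ρ → 0 < f x → α ≤ ‖f' x‖ := by
  obtain ⟨y, hy⟩ := hinf
  intro ρ hρ
  have hden : 0 < ρ + ‖y‖ := by positivity
  refine ⟨-f y / (ρ + ‖y‖), div_pos (neg_pos.mpr hy) hden, fun x hx hfx => ?_⟩
  have hgap : f x - f y ≤ ‖f' x‖ * ‖x - y‖ := by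
    simpa using hconv.sub_le_norm_fderiv_mul_norm_sub trivial trivial (hf' x).hasFDerivAt
  have hdist : ‖x - y‖ ≤ ρ + ‖y‖ := (norm_sub_le x y).trans (by linarith)
  rw [div_le_iff₀ hden]
  calc -f y ≤ f x - f y := by linarith
    _ ≤ ‖f' x‖ * ‖x - y‖ := hgap
    _ ≤ ‖f' x‖ * (ρ + ‖y‖) := by gcongr
end

section
/- Suppose int(C ∩ Fix T) ≠ ∅, (r_n) are positive reals with r_n → 0 and Σ_n η_n r_n = ∞, where η_n ∈ (0, 2]. Let Q_C be a quasi projector of C, x_0 ∈ C, and define x_{n+1} := Q_C(x_n + η_n(U_{r_n} x_n − x_n)) if x_n ∉ Fix T, and x_{n+1} := x_n otherwise, where U_r x := Tx + (r/‖Tx − x‖)(Tx − x) for x ∉ Fix T. Then there exists N such that x_n ∈ C ∩ Fix T for all n ≥ N. -/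
open scoped RealInnerProductSpace

set_option maxHeartbeats 1000000 in
lemma step_ineq {X : Type*} [NormedAddCommGroup X] [InnerProductSpace ℝ X]
    (z a b : X) (ρ rr e : ℝ) (hρ : 0 < ρ) (hr : 0 < rr) (hr2 : rr ≤ ρ / 2)
    (he : 0 < e) (he2 : e ≤ 2) (hba : b ≠ a)
    (hc : ⟪z - b, a - b⟫ ≤ -ρ * ‖b - a‖) :
    ‖a + e • ((b + (rr / ‖b - a‖) • (b - a)) - a) - z‖ ^ 2
      ≤ ‖a - z‖ ^ 2 - e * rr * ρ := by
  set d := ‖b - a‖ with hd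
  have hdpos : 0 < d := norm_pos_iff.mpr (sub_ne_zero.mpr hba)
  set c := e * (1 + rr / d) with hcdef
  have hcpos : 0 < c := by
    apply mul_pos he
    have : 0 < rr / d := div_pos hr hdpos
    linarith
  have hy : a + e • ((b + (rr / d) • (b - a)) - a) - z = (a - z) + c • (b - a) := by
    rw [hcdef]; module
  rw [hy]
  have hexp : ‖(a - z) + c • (b - a)‖ ^ 2
      = ‖a - z‖ ^ 2 + 2 * (c * ⟪a - z, b - a⟫) + c ^ 2 * d ^ 2 := by
    rw [norm_add_sq_real, real_inner_smul_right, norm_smul, Real.norm_eq_abs, mul_pow, sq_abs]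
  have hI : ⟪a - z, b - a⟫ ≤ -(d ^ 2) - ρ * d := by
    have h1 : a - z = (a - b) + (b - z) := by abel
    have h2 : ⟪a - b, b - a⟫ = -(d ^ 2) := by
      have hab : a - b = -(b - a) := by abel
      rw [hab, inner_neg_left, real_inner_self_eq_norm_sq]
    have h3 : ⟪b - z, b - a⟫ = ⟪z - b, a - b⟫ := by
      rw [← inner_neg_neg]; congr 1 <;> abel
    rw [h1, inner_add_left, h2, h3]
    nlinarith [hc]
  have hcd : c * d = e * (d + rr) := by
    rw [hcdef]; field_simp
  have hcb : c * ⟪a - z, b - a⟫ ≤ c * (-(d ^ 2) - ρ * d) :=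
    mul_le_mul_of_nonneg_left hI hcpos.le
  have h5 : c * (-(d ^ 2) - ρ * d) = -(e * (d + rr) * d) - ρ * (e * (d + rr)) := by
    have : c * (-(d ^ 2) - ρ * d) = -(c * d * d) - ρ * (c * d) := by ring
    rw [this, hcd]
  have h6 : c ^ 2 * d ^ 2 = (e * (d + rr)) ^ 2 := by
    rw [← mul_pow, hcd]
  rw [hexp, h6]
  have hA : 0 ≤ e * (d + rr) := by positivity
  have hB : 0 ≤ 2 * (d + ρ) - e * (d + rr) := by nlinarith
  have hfin : e * (d + rr) * (2 * (d + ρ) - e * (d + rr)) ≥ e * rr * ρ := by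
    nlinarith [mul_nonneg hA (by nlinarith [mul_nonneg (by linarith : (0:ℝ) ≤ 2 - e) hdpos.le, mul_le_mul_of_nonneg_right he2 hr.le] : (0:ℝ) ≤ 2 * (d + ρ) - e * (d + rr) - ρ),
      mul_nonneg hρ.le (by nlinarith : (0:ℝ) ≤ e * (d + rr) - e * rr)]
  nlinarith [hcb, h5]

theorem finite_convergence_main1
    {X : Type*} [NormedAddCommGroup X] [InnerProductSpace ℝ X] [CompleteSpace X]
    (T : X → X) (hTne : ∃ y, T y = y)
    (hcut : ∀ x z : X, T z = z → ⟪z - T x, x - T x⟫ ≤ 0)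
    (C : Set X) (hCcl : IsClosed C) (hCcv : Convex ℝ C)
    (hCFix : (C ∩ {z | T z = z}).Nonempty)
    (hint : (interior (C ∩ {z | T z = z})).Nonempty)
    (r : ℕ → ℝ) (hrpos : ∀ n, 0 < r n)
    (hrlim : Filter.Tendsto r Filter.atTop (nhds 0))
    (η : ℕ → ℝ) (hη : ∀ n, η n ∈ Set.Ioc (0:ℝ) 2)
    (hdiv : Filter.Tendsto (fun N => ∑ n ∈ Finset.range N, η n * r n)
      Filter.atTop Filter.atTop)
    (Q : X → X) (hQran : Set.range Q = C) (hQfix : {x : X | Q x = x} = C)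
    (hQqp : ∀ x : X, ∀ c ∈ C, ‖Q x - c‖ ≤ ‖x - c‖)
    (x : ℕ → X) (hx0 : x 0 ∈ C)
    (hrec : ∀ n : ℕ,
      (T (x n) ≠ x n → x (n + 1) =
        Q (x n + η n • ((T (x n) + (r n / ‖T (x n) - x n‖) • (T (x n) - x n)) - x n))) ∧
      (T (x n) = x n → x (n + 1) = x n)) :
    ∃ N : ℕ, ∀ n ≥ N, x n ∈ C ∧ T (x n) = x n := by
  -- Step 1: interior point with a closed ball
  obtain ⟨z, hz⟩ := hint
  obtain ⟨ρ, hρ, hball⟩ := (Metric.nhds_basis_closedBall.mem_iff).mp (mem_interior_iff_mem_nhds.mp hz)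
  have hzin : z ∈ C ∩ {z | T z = z} := hball (Metric.mem_closedBall_self hρ.le)
  have hzC : z ∈ C := hzin.1
  have hzT : T z = z := hzin.2
  -- Step 2: x n ∈ C for all n
  have hxC : ∀ n, x n ∈ C := by
    intro n
    induction n with
    | zero => exact hx0
    | succ n ih =>
      by_cases h : T (x n) = x n
      · rw [(hrec n).2 h]; exact ih
      · rw [(hrec n).1 h, ← hQran]; exact Set.mem_range_self _
  -- Step 3: strengthened cutter inequality at z
  have hcut1 : ∀ v : X, T v ≠ v → ⟪z - T v, v - T v⟫ ≤ -ρ * ‖T v - v‖ := by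
    intro v hv
    set d := ‖T v - v‖ with hd
    have hdpos : 0 < d := norm_pos_iff.mpr (sub_ne_zero.mpr hv)
    set w := z - (ρ / d) • (T v - v) with hw
    have hwball : w ∈ Metric.closedBall z ρ := by
      rw [Metric.mem_closedBall, dist_eq_norm]
      have : w - z = -((ρ / d) • (T v - v)) := by rw [hw]; abel
      rw [this, norm_neg, norm_smul, Real.norm_eq_abs,
        abs_of_nonneg (div_nonneg hρ.le hdpos.le), ← hd]
      rw [div_mul_cancel₀ _ hdpos.ne']
    have hwT : T w = w := (hball hwball).2
    have hcw := hcut v w hwT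
    have hsplit : ⟪w - T v, v - T v⟫
        = ⟪z - T v, v - T v⟫ - (ρ / d) * ⟪T v - v, v - T v⟫ := by
      rw [hw]
      rw [sub_right_comm z ((ρ / d) • (T v - v)) (T v)]
      rw [inner_sub_left, real_inner_smul_left]
    have hvv : ⟪T v - v, v - T v⟫ = -(d ^ 2) := by
      have : v - T v = -(T v - v) := by abel
      rw [this, inner_neg_right, real_inner_self_eq_norm_sq]
    rw [hsplit, hvv] at hcw
    have : (ρ / d) * d ^ 2 = ρ * d := by
      field_simp
    nlinarith [hcw, this]
  -- Step 4: eventually r n ≤ ρ / 2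
  obtain ⟨N0, hN0⟩ := (Filter.eventually_atTop).mp
    (hrlim.eventually_lt_const (by linarith : (0:ℝ) < ρ / 2))
  -- Step 5: descent inequality
  have hdesc : ∀ n ≥ N0, T (x n) ≠ x n →
      ‖x (n + 1) - z‖ ^ 2 ≤ ‖x n - z‖ ^ 2 - η n * r n * ρ := by
    intro n hn hTn
    have hrn2 : r n ≤ ρ / 2 := (hN0 n hn).le
    have hkey := step_ineq z (x n) (T (x n)) ρ (r n) (η n) hρ (hrpos n) hrn2
      (hη n).1 (hη n).2 hTn (hcut1 (x n) hTn)
    have hQ : ‖x (n + 1) - z‖ ≤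
        ‖x n + η n • ((T (x n) + (r n / ‖T (x n) - x n‖) • (T (x n) - x n)) - x n) - z‖ := by
      rw [(hrec n).1 hTn]
      exact hQqp _ z hzC
    have := pow_le_pow_left₀ (norm_nonneg _) hQ 2
    linarith
  -- Step 6: there exists n ≥ N0 with T (x n) = x n
  have hfix : ∃ n ≥ N0, T (x n) = x n := by
    by_contra hcon
    push_neg at hcon
    set S : ℕ → ℝ := fun m => ∑ k ∈ Finset.range m, η k * r k with hS
    have hmono : ∀ m ≥ N0, ‖x m - z‖ ^ 2 ≤ ‖x N0 - z‖ ^ 2 - ρ * (S m - S N0) := by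
      intro m hm
      induction m, hm using Nat.le_induction with
      | base => simp
      | succ m hm ih =>
        have hstep := hdesc m hm (hcon m hm)
        have hSsucc : S (m + 1) = S m + η m * r m := Finset.sum_range_succ _ m
        rw [hSsucc]
        nlinarith [hstep, ih]
    obtain ⟨m, hm1, hm2⟩ := ((hdiv.eventually_ge_atTop
      (S N0 + (‖x N0 - z‖ ^ 2 + 1) / ρ)).and (Filter.eventually_ge_atTop N0)).exists
    have h1 := hmono m hm2
    have h2 : S m - S N0 ≥ (‖x N0 - z‖ ^ 2 + 1) / ρ := by
      have : S m ≥ S N0 + (‖x N0 - z‖ ^ 2 + 1) / ρ := hm1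
      linarith
    have h3 : ρ * (S m - S N0) ≥ ‖x N0 - z‖ ^ 2 + 1 := by
      rw [ge_iff_le, ← div_le_iff₀' hρ]
      exact h2
    nlinarith [sq_nonneg ‖x m - z‖, norm_nonneg (x m - z)]
  obtain ⟨n1, hn1, hfix1⟩ := hfix
  refine ⟨n1, fun n hn => ?_⟩
  have hstable : ∀ n ≥ n1, x n = x n1 := by
    intro n hn
    induction n, hn using Nat.le_induction with
    | base => rfl
    | succ m hm ih =>
      have : T (x m) = x m := by rw [ih, hfix1]
      rw [(hrec m).2 this, ih]
  rw [hstable n hn]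
  exact ⟨hxC n1, hfix1⟩
end

section
/- Suppose C ∩ int Fix T ≠ ∅, (r_n) are positive reals with r_n → 0, η_n ∈ (0, 2], and Σ_n η_n(2 − η_n) r_n² = ∞. Let Q_C be a quasi projector of C, x_0 ∈ C, and define x_{n+1} := Q_C(x_n + η_n(U_{r_n} x_n − x_n)) if x_n ∉ Fix T, else x_{n+1} := x_n, where U_r x := Tx + (r/‖Tx − x‖)(Tx − x). Then the sequence (x_n) lies eventually in C ∩ Fix T. -/
open scoped RealInnerProductSpace

lemma key_step
    {X : Type*} [NormedAddCommGroup X] [InnerProductSpace ℝ X]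
    (T : X → X)
    (hcut : ∀ x z : X, T z = z → ⟪z - T x, x - T x⟫ ≤ 0)
    (w : X) (ρ : ℝ) (hρ : 0 < ρ)
    (hball : ∀ z : X, ‖z - w‖ ≤ ρ → T z = z)
    (xn : X) (hne : T xn ≠ xn)
    (η r : ℝ) (hη0 : 0 < η) (hη2 : η ≤ 2) (hr : 0 < r) (hrρ : r ≤ ρ) :
    ‖(xn + η • ((T xn + (r / ‖T xn - xn‖) • (T xn - xn)) - xn)) - w‖ ^ 2
      ≤ ‖xn - w‖ ^ 2 - η * (2 - η) * r ^ 2 := by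
  set u : X := T xn - xn with hu_def
  have hu : u ≠ 0 := sub_ne_zero.mpr hne
  set s : ℝ := ‖u‖ with hs_def
  have hs : 0 < s := norm_pos_iff.mpr hu
  have hTxn : T xn = xn + u := by rw [hu_def]; abel
  -- cutter at z = w - (ρ/s) • u
  have hz : T (w - (ρ / s) • u) = w - (ρ / s) • u := by
    apply hball
    have e : (w - (ρ / s) • u) - w = -((ρ / s) • u) := by abel
    rw [e, norm_neg, norm_smul, Real.norm_eq_abs, abs_of_pos (by positivity),
      div_mul_cancel₀ _ hs.ne']
  have hc := hcut xn _ hz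
  have hA : s ^ 2 + ρ * s ≤ ⟪w - xn, u⟫ := by
    have e1 : (w - (ρ / s) • u) - T xn = (w - xn) - (1 + ρ / s) • u := by
      rw [hTxn]; module
    have e2 : xn - T xn = -u := by rw [hTxn]; abel
    rw [e1, e2, inner_neg_right, inner_sub_left, real_inner_smul_left,
      real_inner_self_eq_norm_sq] at hc
    have hρs : (1 + ρ / s) * s ^ 2 = s ^ 2 + ρ * s := by field_simp
    nlinarith [hc]
  -- the iterate
  have hv : (T xn + (r / s) • u) - xn = (1 + r / s) • u := by
    rw [hTxn]; module
  have hy : (xn + η • ((T xn + (r / s) • u) - xn)) - w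
      = (xn - w) + (η * (1 + r / s)) • u := by
    rw [hv, smul_smul]; abel
  rw [hy, norm_add_sq_real, real_inner_smul_right, norm_smul, Real.norm_eq_abs, mul_pow, sq_abs]
  have hxw : ⟪xn - w, u⟫ = -⟪w - xn, u⟫ := by
    rw [← neg_sub, inner_neg_left]
  rw [hxw]
  have hts : (1 + r / s) * s = s + r := by field_simp
  have ht : 0 < 1 + r / s := by positivity
  have e3 : (η * (1 + r / s)) ^ 2 * s ^ 2 = η ^ 2 * (s + r) ^ 2 := by
    have : (η * (1 + r / s)) ^ 2 * s ^ 2 = η ^ 2 * ((1 + r / s) * s) ^ 2 := by ring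
    rw [this, hts]
  have e4 : η * (1 + r / s) * (s ^ 2 + ρ * s) = η * ((s + r) * (s + ρ)) := by
    have : η * (1 + r / s) * (s ^ 2 + ρ * s) = η * (((1 + r / s) * s) * (s + ρ)) := by ring
    rw [this, hts]
  have h5 : η * ((s + r) * (s + ρ)) ≤ η * (1 + r / s) * ⟪w - xn, u⟫ := by
    rw [← e4]
    exact mul_le_mul_of_nonneg_left hA (mul_pos hη0 ht).le
  rw [e3]
  nlinarith [h5,
    mul_nonneg (mul_nonneg hη0.le (sub_nonneg.mpr hη2))
      (by nlinarith : (0:ℝ) ≤ (s + r) ^ 2 - r ^ 2),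
    mul_nonneg (mul_nonneg hη0.le (by linarith : (0:ℝ) ≤ s + r)) (by linarith : (0:ℝ) ≤ ρ - r)]

theorem finite_convergence_main2
    {X : Type*} [NormedAddCommGroup X] [InnerProductSpace ℝ X] [CompleteSpace X]
    (T : X → X) (hTne : ∃ y, T y = y)
    (hcut : ∀ x z : X, T z = z → ⟪z - T x, x - T x⟫ ≤ 0)
    (C : Set X) (hCcl : IsClosed C) (hCcv : Convex ℝ C)
    (hCFix : (C ∩ {z | T z = z}).Nonempty)
    (hint : (C ∩ interior {z | T z = z}).Nonempty)
    (r : ℕ → ℝ) (hrpos : ∀ n, 0 < r n)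
    (hrlim : Filter.Tendsto r Filter.atTop (nhds 0))
    (η : ℕ → ℝ) (hη : ∀ n, η n ∈ Set.Ioc (0:ℝ) 2)
    (hdiv : Filter.Tendsto (fun N => ∑ n ∈ Finset.range N, η n * (2 - η n) * r n ^ 2)
      Filter.atTop Filter.atTop)
    (Q : X → X) (hQran : Set.range Q = C) (hQfix : {x : X | Q x = x} = C)
    (hQqp : ∀ x : X, ∀ c ∈ C, ‖Q x - c‖ ≤ ‖x - c‖)
    (x : ℕ → X) (hx0 : x 0 ∈ C)
    (hrec : ∀ n : ℕ,
      (T (x n) ≠ x n → x (n + 1) =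
        Q (x n + η n • ((T (x n) + (r n / ‖T (x n) - x n‖) • (T (x n) - x n)) - x n))) ∧
      (T (x n) = x n → x (n + 1) = x n)) :
    ∃ N : ℕ, ∀ n ≥ N, x n ∈ C ∧ T (x n) = x n := by
  have hxC : ∀ n, x n ∈ C := by
    intro n
    induction n with
    | zero => exact hx0
    | succ n ih =>
      by_cases h : T (x n) = x n
      · rw [(hrec n).2 h]; exact ih
      · rw [(hrec n).1 h, ← hQran]; exact Set.mem_range_self _
  suffices hfix : ∃ N, T (x N) = x N by
    obtain ⟨N, hN⟩ := hfix
    refine ⟨N, fun n hn => ?_⟩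
    have key : ∀ m, T (x (N + m)) = x (N + m) := by
      intro m
      induction m with
      | zero => simpa using hN
      | succ m ih =>
        have h := (hrec (N + m)).2 ih
        rw [show N + (m + 1) = (N + m) + 1 from rfl, h]
        exact ih
    obtain ⟨m, rfl⟩ := Nat.exists_eq_add_of_le hn
    exact ⟨hxC _, key m⟩
  by_contra hno
  push_neg at hno
  obtain ⟨w, hwC, hwint⟩ := hint
  obtain ⟨ε, hε, hball⟩ := Metric.mem_nhds_iff.mp (mem_interior_iff_mem_nhds.mp hwint)
  set ρ : ℝ := ε / 2 with hρdef
  have hρ : 0 < ρ := by positivity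
  have hball' : ∀ z : X, ‖z - w‖ ≤ ρ → T z = z := fun z hz =>
    hball (by rw [Metric.mem_ball, dist_eq_norm]; linarith)
  obtain ⟨N₀, hN₀⟩ := Filter.eventually_atTop.mp (hrlim.eventually (gt_mem_nhds hρ))
  have hstep : ∀ n, N₀ ≤ n →
      ‖x (n + 1) - w‖ ^ 2 ≤ ‖x n - w‖ ^ 2 - η n * (2 - η n) * r n ^ 2 := by
    intro n hn
    have hne := hno n
    rw [(hrec n).1 hne]
    have hk := key_step T hcut w ρ hρ hball' (x n) hne (η n) (r n)
      (hη n).1 (hη n).2 (hrpos n) (hN₀ n hn).le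
    have hq := hQqp (x n + η n • ((T (x n) + (r n / ‖T (x n) - x n‖) • (T (x n) - x n)) - x n)) w hwC
    calc ‖Q (x n + η n • ((T (x n) + (r n / ‖T (x n) - x n‖) • (T (x n) - x n)) - x n)) - w‖ ^ 2
        ≤ ‖(x n + η n • ((T (x n) + (r n / ‖T (x n) - x n‖) • (T (x n) - x n)) - x n)) - w‖ ^ 2 :=
          pow_le_pow_left₀ (norm_nonneg _) hq 2
      _ ≤ _ := hk
  have hsum : ∀ m, (∑ k ∈ Finset.range m, η (N₀ + k) * (2 - η (N₀ + k)) * r (N₀ + k) ^ 2)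
      ≤ ‖x N₀ - w‖ ^ 2 := by
    have hmain : ∀ m, ‖x (N₀ + m) - w‖ ^ 2
        + ∑ k ∈ Finset.range m, η (N₀ + k) * (2 - η (N₀ + k)) * r (N₀ + k) ^ 2
        ≤ ‖x N₀ - w‖ ^ 2 := by
      intro m
      induction m with
      | zero => simp
      | succ m ih =>
        rw [Finset.sum_range_succ]
        have h := hstep (N₀ + m) (Nat.le_add_right _ _)
        have e : N₀ + (m + 1) = (N₀ + m) + 1 := rfl
        rw [e]
        linarith
    intro m
    have := hmain m
    nlinarith [sq_nonneg ‖x (N₀ + m) - w‖]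
  set B : ℝ := (∑ n ∈ Finset.range N₀, η n * (2 - η n) * r n ^ 2) + ‖x N₀ - w‖ ^ 2 with hB
  obtain ⟨M, hM⟩ := Filter.eventually_atTop.mp (hdiv.eventually_gt_atTop B)
  have hMN := hM (max M N₀) (le_max_left _ _)
  obtain ⟨m, hm⟩ := Nat.exists_eq_add_of_le (le_max_right M N₀ : N₀ ≤ max M N₀)
  rw [hm, Finset.sum_range_add] at hMN
  have := hsum m
  simp only [hB] at hMN
  linarith
end

section
/- Let f(x) = x² − 1 on ℝ and T = G_f its subgradient projector. Fix x_0 > 1, set r_{−1} := x_0 − 1 and r_n := r_{n−1}²/(4(1 + r_{n−1})) for n ≥ 0, and define x_{n+1} := U_{r_n} x_n = x_n/2 + 1/(2x_n) − r_n for n ≥ 0. Then for every n ≥ 0: x_n = 1 + r_{n−1} > 1; moreover r_n → 0 and Σ_n r_n < ∞. -/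
theorem divergent_series_needed
    (x₀ : ℝ) (hx₀ : 1 < x₀)
    (s : ℕ → ℝ) (hs0 : s 0 = x₀ - 1)
    (hsrec : ∀ n : ℕ, s (n + 1) = (s n) ^ 2 / (4 * (1 + s n)))
    (x : ℕ → ℝ) (hx0 : x 0 = x₀)
    (hxrec : ∀ n : ℕ, x (n + 1) = x n / 2 + 1 / (2 * x n) - s (n + 1)) :
    (∀ n : ℕ, x n = 1 + s n ∧ 1 < x n) ∧
      Filter.Tendsto s Filter.atTop (nhds 0) ∧ Summable s := by
  have hpos : ∀ n, 0 < s n ∧ x n = 1 + s n := by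
    intro n
    induction n with
    | zero =>
      refine ⟨by rw [hs0]; linarith, by rw [hx0, hs0]; ring⟩
    | succ n ih =>
      obtain ⟨hp, hxe⟩ := ih
      have h1 : (0:ℝ) < 1 + s n := by linarith
      refine ⟨by rw [hsrec]; exact div_pos (pow_pos hp 2) (by linarith), ?_⟩
      rw [hxrec, hxe, hsrec]
      field_simp
      ring
  have hle : ∀ n, s n ≤ s 0 * (1/4)^n := by
    intro n
    induction n with
    | zero => simp
    | succ n ih =>
      have hp := (hpos n).1
      have h : s (n+1) ≤ s n / 4 := by
        rw [hsrec, div_le_div_iff₀ (by linarith) (by norm_num)]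
        nlinarith
      calc s (n+1) ≤ s n / 4 := h
        _ ≤ (s 0 * (1/4)^n)/4 := by linarith
        _ = s 0 * (1/4)^(n+1) := by ring
  have hsum : Summable s := by
    apply Summable.of_nonneg_of_le (fun n => (hpos n).1.le) hle
    exact (summable_geometric_of_lt_one (by norm_num) (by norm_num)).mul_left _
  exact ⟨fun n => ⟨(hpos n).2, by have := (hpos n).1; linarith [(hpos n).2]⟩,
    hsum.tendsto_atTop_zero, hsum⟩
end

section
/- With f(x) = x² − 1 and T = G_f on ℝ, the operator U_r (for r > 0) is not a cutter: there exist x ∈ ℝ and y ∈ Fix U_r = [−1, 1] with ⟨y − U_r x, x − U_r x⟩ > 0. -/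
theorem Ur_not_cutter
    (r : ℝ) (hr : 0 < r)
    (U : ℝ → ℝ)
    (hU : ∀ x : ℝ, U x = if 1 < |x| then x / 2 + 1 / (2 * x) - r * Real.sign x else x) :
    ∃ x : ℝ, ∃ y ∈ Set.Icc (-1 : ℝ) 1, 0 < (y - U x) * (x - U x) := by
  set m := min r 1 with hm
  have hm0 : 0 < m := lt_min hr one_pos
  have hmr : m ≤ r := min_le_left _ _
  have hm1 : m ≤ 1 := min_le_right _ _
  set x := 1 + m with hx
  have hx1 : 1 < x := by simp [hx]; linarith
  have hx0 : 0 < x := by linarith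
  have habs : 1 < |x| := by rwa [abs_of_pos hx0]
  have hsign : Real.sign x = 1 := Real.sign_of_pos hx0
  have hUx : U x = x / 2 + 1 / (2 * x) - r := by
    rw [hU x, if_pos habs, hsign]; ring
  have hUlt : U x < 1 := by
    rw [hUx]
    have h2x : (0:ℝ) < 2 * x := by linarith
    rw [div_add_div _ _ (by norm_num) (ne_of_gt h2x), sub_lt_iff_lt_add]
    rw [div_lt_iff₀ (by linarith : (0:ℝ) < 2 * (2 * x))]
    nlinarith [sq_nonneg m, mul_le_mul_of_nonneg_left hm1 hm0.le]
  refine ⟨x, 1, ⟨by norm_num, le_refl 1⟩, ?_⟩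
  have h1 : 0 < 1 - U x := by linarith
  have h2 : 0 < x - U x := by linarith
  positivity
end

section
/- Let D be a nonempty closed convex subset of X and C a closed convex set with int(C ∩ D) ≠ ∅. Let (r_n) be positive with r_n → 0 and Σ_n r_n = ∞. Define x_0 ∈ C and x_{n+1} := P_C(P_D x_n + r_n (P_D x_n − x_n)/‖P_D x_n − x_n‖) if x_n ∉ D, and x_{n+1} := x_n if x_n ∈ D. Then (x_n) lies eventually in C ∩ D. -/
/-!
Fix a ball `closedBall z ρ ⊆ C ∩ D`. If `x ∉ D` and `y = P_D x`, the variational inequality of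
`P_D` tested at the point of the ball farthest in the direction `x - y` gives
`ρ ‖x - y‖ ≤ ⟪x - y, y - z⟫`, so the step of length `r` from `y` away from `x` gains `2ρr - r²`
in squared distance to `z`, and `P_C` loses nothing. Hence once `r n ≤ ρ`, every step taken
outside `D` decreases `‖x n - z‖²` by at least `ρ r n`; since `∑ r n = ∞` this can happen only
finitely often in a row, and the sequence is constant after its first visit to `D`.
-/

open RealInnerProductSpace Filter Finset Metric

section MetricProjection

variable {X : Type*} [NormedAddCommGroup X] [InnerProductSpace ℝ X]

def IsMetricProjection (K : Set X) (P : X → X) : Prop :=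
  ∀ x, P x ∈ K ∧ ∀ c ∈ K, ‖x - P x‖ ≤ ‖x - c‖

variable {K : Set X} {P : X → X}

namespace IsMetricProjection

theorem inner_nonpos (hK : Convex ℝ K) (hP : IsMetricProjection K P) (x : X) {w : X}
    (hw : w ∈ K) : ⟪x - P x, w - P x⟫ ≤ 0 := by
  have : Nonempty K := ⟨⟨w, hw⟩⟩
  refine (norm_eq_iInf_iff_real_inner_le_zero hK (hP x).1).mp ?_ w hw
  have hbdd : BddBelow (Set.range fun c : K => ‖x - c‖) :=
    ⟨0, Set.forall_mem_range.2 fun _ => norm_nonneg _⟩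
  exact le_antisymm (le_ciInf fun c => (hP x).2 c c.2) (ciInf_le hbdd ⟨P x, (hP x).1⟩)

theorem norm_sub_le_of_mem (hK : Convex ℝ K) (hP : IsMetricProjection K P) (x : X) {z : X}
    (hz : z ∈ K) : ‖P x - z‖ ≤ ‖x - z‖ := by
  have hinner : 0 ≤ ⟪x - P x, P x - z⟫ := by
    rw [← neg_sub z, inner_neg_right, neg_nonneg]
    exact hP.inner_nonpos hK x hz
  have hsq : ‖x - z‖ ^ 2 = ‖x - P x‖ ^ 2 + 2 * ⟪x - P x, P x - z⟫ + ‖P x - z‖ ^ 2 := by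
    rw [← norm_add_sq_real, sub_add_sub_cancel]
  exact pow_le_pow_iff_left₀ (norm_nonneg _) (norm_nonneg _) two_ne_zero |>.mp
    (by linarith [sq_nonneg ‖x - P x‖])

theorem mul_norm_le_inner_of_closedBall_subset (hK : Convex ℝ K) (hP : IsMetricProjection K P)
    (x : X) {z : X} {ρ : ℝ} (hρ : 0 ≤ ρ) (hball : closedBall z ρ ⊆ K) :
    ρ * ‖x - P x‖ ≤ ⟪x - P x, P x - z⟫ := by
  set d := ‖x - P x‖
  rcases eq_or_ne d 0 with hd | hd
  · rw [hd, mul_zero, norm_eq_zero.mp hd, inner_zero_left]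
  have hw : z + (ρ / d) • (x - P x) ∈ K := by
    apply hball
    rw [mem_closedBall, dist_eq_norm, add_sub_cancel_left, norm_smul, Real.norm_eq_abs,
      abs_div, abs_of_nonneg hρ, abs_norm, div_mul_cancel₀ ρ hd]
  have hvar := hP.inner_nonpos hK x hw
  have hdd : ρ / d * d ^ 2 = ρ * d := by field_simp
  rw [show z + (ρ / d) • (x - P x) - P x = (ρ / d) • (x - P x) - (P x - z) by abel,
    inner_sub_right, real_inner_smul_right, real_inner_self_eq_norm_sq, hdd] at hvar
  linarith

end IsMetricProjection

theorem norm_add_smul_sub_sq_le {x y z : X} {ρ t : ℝ} (hxy : x ≠ y) (ht : 0 ≤ t)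
    (hρ : ρ * ‖x - y‖ ≤ ⟪x - y, y - z⟫) :
    ‖y + (t / ‖y - x‖) • (y - x) - z‖ ^ 2 ≤ ‖y - z‖ ^ 2 - 2 * ρ * t + t ^ 2 := by
  rw [norm_sub_rev y x]
  have hd : 0 < ‖x - y‖ := norm_pos_iff.mpr (sub_ne_zero.mpr hxy)
  have hgain : ρ * t ≤ t / ‖x - y‖ * ⟪x - y, y - z⟫ := by
    calc ρ * t = t / ‖x - y‖ * (ρ * ‖x - y‖) := by field_simp
      _ ≤ t / ‖x - y‖ * ⟪x - y, y - z⟫ := by gcongr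
  have hlen : ‖(t / ‖x - y‖) • (y - x)‖ = t := by
    rw [norm_smul, Real.norm_of_nonneg (by positivity), norm_sub_rev y x, div_mul_cancel₀ t hd.ne']
  have hflip : ⟪y - z, y - x⟫ = -⟪x - y, y - z⟫ := by
    rw [real_inner_comm, ← neg_sub x y, inner_neg_left]
  rw [add_sub_right_comm, norm_add_sq_real, hlen, real_inner_smul_right, hflip]
  linarith

theorem norm_sub_sq_le_of_projected_step {C D : Set X} {PC PD : X → X} (hCcv : Convex ℝ C)
    (hPC : IsMetricProjection C PC) (hDcv : Convex ℝ D) (hPD : IsMetricProjection D PD)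
    {z : X} {ρ : ℝ} (hball : closedBall z ρ ⊆ C ∩ D) {x : X} (hx : x ∉ D) {t : ℝ}
    (ht : 0 ≤ t) (htρ : t ≤ ρ) :
    ‖PC (PD x + (t / ‖PD x - x‖) • (PD x - x)) - z‖ ^ 2 ≤ ‖x - z‖ ^ 2 - ρ * t := by
  have hρ : 0 ≤ ρ := ht.trans htρ
  have hz : z ∈ C ∩ D := hball (mem_closedBall_self hρ)
  have hxy : x ≠ PD x := fun h => hx (h ▸ (hPD x).1)
  calc ‖PC (PD x + (t / ‖PD x - x‖) • (PD x - x)) - z‖ ^ 2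
      ≤ ‖PD x + (t / ‖PD x - x‖) • (PD x - x) - z‖ ^ 2 := by
        gcongr; exact hPC.norm_sub_le_of_mem hCcv _ hz.1
    _ ≤ ‖PD x - z‖ ^ 2 - 2 * ρ * t + t ^ 2 :=
        norm_add_smul_sub_sq_le hxy ht <| hPD.mul_norm_le_inner_of_closedBall_subset hDcv x hρ
          (hball.trans Set.inter_subset_right)
    _ ≤ ‖x - z‖ ^ 2 - 2 * ρ * t + t ^ 2 := by
        gcongr; exact hPD.norm_sub_le_of_mem hDcv x hz.2
    _ ≤ ‖x - z‖ ^ 2 - ρ * t := by nlinarith [mul_nonneg ht (sub_nonneg.mpr htρ)]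

end MetricProjection

theorem not_tendsto_sum_range_atTop_of_le_sub {a r : ℕ → ℝ} {c : ℝ} (hc : 0 < c)
    (ha : ∀ n, 0 ≤ a n) {N₀ : ℕ} (hstep : ∀ n ≥ N₀, a (n + 1) ≤ a n - c * r n) :
    ¬ Tendsto (fun N => ∑ n ∈ range N, r n) atTop atTop := by
  have hanti : ∀ n ≥ N₀, a n + c * ∑ i ∈ range n, r i ≤ a N₀ + c * ∑ i ∈ range N₀, r i := by
    intro n hn
    induction n, hn using Nat.le_induction with
    | base => exact le_rfl
    | succ n hn ih =>
      rw [sum_range_succ, mul_add]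
      linarith [hstep n hn]
  intro hdiv
  obtain ⟨n, hn, hlarge⟩ := ((eventually_ge_atTop N₀).and
    (hdiv.eventually_gt_atTop ((a N₀ + c * ∑ i ∈ range N₀, r i) / c))).exists
  rw [div_lt_iff₀ hc] at hlarge
  linarith [hanti n hn, ha n]

theorem convex_feasibility_finite_general
    {X : Type*} [NormedAddCommGroup X] [InnerProductSpace ℝ X]
    (D : Set X) (hDcv : Convex ℝ D)
    (C : Set X) (hCcv : Convex ℝ C)
    (hint : (interior (C ∩ D)).Nonempty)
    (PC PD : X → X)
    (hPC : ∀ x : X, PC x ∈ C ∧ ∀ c ∈ C, ‖x - PC x‖ ≤ ‖x - c‖)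
    (hPD : ∀ x : X, PD x ∈ D ∧ ∀ d ∈ D, ‖x - PD x‖ ≤ ‖x - d‖)
    (r : ℕ → ℝ) (hrpos : ∀ n, 0 < r n)
    (hrlim : Filter.Tendsto r Filter.atTop (nhds 0))
    (hdiv : Filter.Tendsto (fun N => ∑ n ∈ Finset.range N, r n)
      Filter.atTop Filter.atTop)
    (x : ℕ → X) (hx0 : x 0 ∈ C)
    (hrec : ∀ n : ℕ,
      (x n ∉ D → x (n + 1) =
        PC (PD (x n) + (r n / ‖PD (x n) - x n‖) • (PD (x n) - x n))) ∧
      (x n ∈ D → x (n + 1) = x n)) :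
    ∃ N : ℕ, ∀ n ≥ N, x n ∈ C ∩ D := by
  obtain ⟨z, hz⟩ := hint
  obtain ⟨ρ, hρ, hball⟩ := nhds_basis_closedBall.mem_iff.mp (mem_interior_iff_mem_nhds.mp hz)
  have hxC : ∀ n, x n ∈ C := by
    intro n
    induction n with
    | zero => exact hx0
    | succ n ih =>
      by_cases hn : x n ∈ D
      · rw [(hrec n).2 hn]; exact ih
      · rw [(hrec n).1 hn]; exact (hPC _).1
  obtain ⟨N₀, hN₀⟩ := eventually_atTop.mp (hrlim.eventually_le_const hρ)
  obtain ⟨N, -, hND⟩ : ∃ N ≥ N₀, x N ∈ D := by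
    by_contra! hout
    refine not_tendsto_sum_range_atTop_of_le_sub hρ (a := fun n => ‖x n - z‖ ^ 2) (N₀ := N₀)
      (fun n => by positivity) (fun n hn => ?_) hdiv
    rw [(hrec n).1 (hout n hn)]
    exact norm_sub_sq_le_of_projected_step hCcv hPC hDcv hPD hball (hout n hn)
      (hrpos n).le (hN₀ n hn)
  have hstay : ∀ n ≥ N, x n = x N := by
    intro n hn
    induction n, hn using Nat.le_induction with
    | base => rfl
    | succ n _ ih => rw [(hrec n).2 (ih ▸ hND), ih]
  exact ⟨N, fun n hn => hstay n hn ▸ ⟨hxC N, hND⟩⟩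

theorem convex_feasibility_finite
    {X : Type*} [NormedAddCommGroup X] [InnerProductSpace ℝ X] [CompleteSpace X]
    (D : Set X) (hDne : D.Nonempty) (hDcl : IsClosed D) (hDcv : Convex ℝ D)
    (C : Set X) (hCcl : IsClosed C) (hCcv : Convex ℝ C)
    (hint : (interior (C ∩ D)).Nonempty)
    (PC PD : X → X)
    (hPC : ∀ x : X, PC x ∈ C ∧ ∀ c ∈ C, ‖x - PC x‖ ≤ ‖x - c‖)
    (hPD : ∀ x : X, PD x ∈ D ∧ ∀ d ∈ D, ‖x - PD x‖ ≤ ‖x - d‖)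
    (r : ℕ → ℝ) (hrpos : ∀ n, 0 < r n)
    (hrlim : Filter.Tendsto r Filter.atTop (nhds 0))
    (hdiv : Filter.Tendsto (fun N => ∑ n ∈ Finset.range N, r n)
      Filter.atTop Filter.atTop)
    (x : ℕ → X) (hx0 : x 0 ∈ C)
    (hrec : ∀ n : ℕ,
      (x n ∉ D → x (n + 1) =
        PC (PD (x n) + (r n / ‖PD (x n) - x n‖) • (PD (x n) - x n))) ∧
      (x n ∈ D → x (n + 1) = x n)) :
    ∃ N : ℕ, ∀ n ≥ N, x n ∈ C ∩ D :=
  convex_feasibility_finite_general D hDcv C hCcv hint PC PD hPC hPD r hrpos hrlim hdiv x hx0 hrec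
end

section
/- Let f(x) = x² on ℝ and T = G_f, so that Tx = x/2 and Fix T = {0}. For r ≥ 0 and x ≠ 0 define U_r x := x/2 − r·sgn(x). Let x_0 = 1/2, w_n := (n+1)^{−1/2}, and r_n := w_n if U_{w_n} x_n ≠ 0, r_n := 2w_n if U_{w_n} x_n = 0, with x_{n+1} := U_{r_n} x_n. Then for every n: 0 < |x_n|/2 < r_n; in particular x_n ≠ 0 for all n, so the iteration never reaches Fix T, even though r_n → 0 and Σ r_n² = ∞. -/
lemma sqrt_aux (n : ℕ) : (1:ℝ) / Real.sqrt (n + 1) / 2 < 1 / Real.sqrt ((n + 1 : ℕ) + 1) := by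
  have h1 : (0:ℝ) < Real.sqrt (n + 1) := Real.sqrt_pos.2 (by positivity)
  have h2 : (0:ℝ) < Real.sqrt ((n + 1 : ℕ) + 1) := Real.sqrt_pos.2 (by positivity)
  have s1 : Real.sqrt ((n:ℝ) + 1) ^ 2 = (n:ℝ) + 1 := Real.sq_sqrt (by positivity)
  have s2 : Real.sqrt (((n + 1 : ℕ):ℝ) + 1) ^ 2 = ((n + 1 : ℕ):ℝ) + 1 := Real.sq_sqrt (by positivity)
  rw [div_div, div_lt_div_iff₀ (by positivity) (by positivity)]
  push_cast at s2 ⊢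
  nlinarith [h1, h2, s1, s2]

theorem interior_needed
    (w : ℕ → ℝ) (hw : ∀ n : ℕ, w n = 1 / Real.sqrt (n + 1))
    (x : ℕ → ℝ) (hx0 : x 0 = 1 / 2)
    (r : ℕ → ℝ)
    (hr : ∀ n : ℕ,
      (x n / 2 - w n * Real.sign (x n) ≠ 0 → r n = w n) ∧
      (x n / 2 - w n * Real.sign (x n) = 0 → r n = 2 * w n))
    (hxrec : ∀ n : ℕ, x (n + 1) = x n / 2 - r n * Real.sign (x n)) :
    ∀ n : ℕ, 0 < |x n| / 2 ∧ |x n| / 2 < r n := by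
  have hwpos : ∀ n : ℕ, 0 < w n := by
    intro n
    rw [hw n]
    have : (0:ℝ) < Real.sqrt (n + 1) := Real.sqrt_pos.2 (by positivity)
    positivity
  have hwstep : ∀ n : ℕ, w n / 2 < w (n + 1) := by
    intro n
    rw [hw n, hw (n + 1)]
    have := sqrt_aux n
    push_cast at this ⊢
    linarith
  have hrge : ∀ n : ℕ, w n ≤ r n := by
    intro n
    by_cases h : x n / 2 - w n * Real.sign (x n) = 0
    · rw [(hr n).2 h]; linarith [hwpos n]
    · rw [(hr n).1 h]
  intro n
  induction n with
  | zero =>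
    have hs : Real.sign (x 0) = 1 := Real.sign_of_pos (by rw [hx0]; norm_num)
    have hw0 : w 0 = 1 := by rw [hw 0]; norm_num
    have hcond : x 0 / 2 - w 0 * Real.sign (x 0) ≠ 0 := by
      rw [hs, hw0, hx0]; norm_num
    have hr0 : r 0 = 1 := by rw [(hr 0).1 hcond, hw0]
    rw [hx0, hr0, show |(1:ℝ)/2| = 1/2 from abs_of_pos (by norm_num)]
    norm_num
  | succ n ih =>
    obtain ⟨h1, h2⟩ := ih
    have hxne : x n ≠ 0 := by
      intro h; rw [h] at h1; simp at h1
    -- |x (n+1)| = r n - |x n| / 2, and ≤ w n, with positivity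
    have key : 0 < |x (n + 1)| ∧ |x (n + 1)| ≤ w n := by
      by_cases h : x n / 2 - w n * Real.sign (x n) = 0
      · have hrn : r n = 2 * w n := (hr n).2 h
        rcases lt_or_gt_of_ne hxne with hneg | hpos
        · have hs : Real.sign (x n) = -1 := Real.sign_of_neg hneg
          rw [hs] at h
          have hx2 : x n / 2 = -w n := by linarith
          have : x (n + 1) = w n := by
            rw [hxrec n, hrn, hs, hx2]; ring
          rw [this, abs_of_pos (hwpos n)]
          exact ⟨hwpos n, le_refl _⟩
        · have hs : Real.sign (x n) = 1 := Real.sign_of_pos hpos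
          rw [hs] at h
          have hx2 : x n / 2 = w n := by linarith
          have : x (n + 1) = -w n := by
            rw [hxrec n, hrn, hs, hx2]; ring
          rw [this, abs_of_neg (by linarith [hwpos n])]
          exact ⟨by linarith [hwpos n], le_of_eq (neg_neg _)⟩
      · have hrn : r n = w n := (hr n).1 h
        have hne : x (n + 1) ≠ 0 := by
          rw [hxrec n, hrn]; exact h
        constructor
        · exact abs_pos.2 hne
        · rcases lt_or_gt_of_ne hxne with hneg | hpos
          · have hs : Real.sign (x n) = -1 := Real.sign_of_neg hneg
            have habs : |x n| = -x n := abs_of_neg hneg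
            have hxe : x (n + 1) = x n / 2 + r n := by
              rw [hxrec n, hs]; ring
            have hpos' : 0 < x (n + 1) := by
              rw [hxe]; rw [habs] at h2; linarith
            rw [abs_of_pos hpos', hxe, hrn]
            rw [habs] at h1; linarith
          · have hs : Real.sign (x n) = 1 := Real.sign_of_pos hpos
            have habs : |x n| = x n := abs_of_pos hpos
            have hxe : x (n + 1) = x n / 2 - r n := by
              rw [hxrec n, hs]; ring
            have hneg' : x (n + 1) < 0 := by
              rw [hxe]; rw [habs] at h2; linarith
            rw [abs_of_neg hneg', hxe, hrn]
            rw [habs] at h1; linarith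
    obtain ⟨k1, k2⟩ := key
    refine ⟨by linarith, ?_⟩
    have := hwstep n
    have := hrge (n + 1)
    linarith
end
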